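/- Let F^negpt := {δ_x : x ∈ X} ∪ {-δ_x : x ∈ X} be the class of point functions and negated point functions on an infinite set X, where δ_x(y) = 1 iff y = x. Then vc(F^negpt) = Ldim(F^negpt) = 3, but the class F̃^negpt := {SOA_G : G ⊆ F^negpt} has infinite VC dimension. -/

import Mathlib

/-!
Littlestone shattering unfolds recursively: a class shatters a tree of depth `n + 1` iff some
point `x` splits it into two classes `G|(x,1)` and `G|(x,-1)` that both shatter depth `n`. So a
shattered tree of depth `n` needs `2 ^ n` hypotheses, and after fixing one or two values only one
or two (negated) point functions survive; this gives `Ldim F^negpt ≤ 3`. Every VC-shattered set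
labels the levels of a shattered tree, so the three points shattered by `F^negpt` give both lower
bounds.

For the SOA classifiers take `G_T`, the point functions at points of `T` together with all
negated point functions. If `x ∈ T`, then `G_T|(x,1)` contains `δ_x` and infinitely many `-δ_z`
and has dimension `2`, while `G_T|(x,-1)` has dimension at most `2`. If `x ∉ T` and `|T| ≥ 3`,
then `G_T|(x,1)` consists of negated point functions (dimension at most `1`) while `G_T|(x,-1)`
contains three point functions and `-δ_x` (dimension `2`). So `SOA_{G_T}` is the indicator of
`T`, and a labelling of a finite set `s` is realised by taking for `T` its positive points together
with the complement of `s`.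
-/

open Classical

/-- The subclass of `G` consistent with a finite list of labeled examples. -/
def restrictList {X : Type*} (G : Set (X → Bool)) (S : List (X × Bool)) : Set (X → Bool) :=
  {f ∈ G | ∀ p ∈ S, f p.1 = p.2}

/-- `G` restricted to hypotheses with `f x = b`. -/
def res {X : Type*} (G : Set (X → Bool)) (x : X) (b : Bool) : Set (X → Bool) :=
  {f ∈ G | f x = b}

/-- The subclass of `G` consistent with the branch `b` of the binary tree `t`
(nodes of `t` are indexed by the list of bits on the path from the root). -/
def branchRestrict {X : Type*} (G : Set (X → Bool)) (t : List Bool → X) (b : List Bool) :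
    Set (X → Bool) :=
  {f ∈ G | ∀ i < b.length, f (t (b.take i)) = b.getD i false}

/-- `G` shatters the complete binary tree `t` to depth `n`. -/
def ShattersTree {X : Type*} (G : Set (X → Bool)) (t : List Bool → X) (n : ℕ) : Prop :=
  ∀ b : List Bool, b.length = n → (branchRestrict G t b).Nonempty

/-- `G` shatters some complete `X`-valued binary tree of depth `n`. -/
def ShattersDepth {X : Type*} (G : Set (X → Bool)) (n : ℕ) : Prop :=
  ∃ t : List Bool → X, ShattersTree G t n

/-- Littlestone dimension: the largest depth of a shattered tree, with `Ldim ∅ = ⊥` (i.e. `-1`). -/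
noncomputable def Ldim {X : Type*} (G : Set (X → Bool)) : WithBot ℕ∞ :=
  ⨆ n : {n : ℕ // ShattersDepth G n}, (n.1 : WithBot ℕ∞)

/-- `G` is `k`-irreducible: every depth-`k` tree has a branch whose restriction preserves `Ldim`. -/
def Irred {X : Type*} (G : Set (X → Bool)) (k : ℕ) : Prop :=
  ∀ t : List Bool → X, ∃ b : List Bool, b.length = k ∧
    Ldim (branchRestrict G t b) = Ldim G

/-- The SOA classifier of `G`: `SOA G x = true` iff `Ldim (G|_(x,1)) ≥ Ldim (G|_(x,-1))`. -/
noncomputable def SOA {X : Type*} (G : Set (X → Bool)) (x : X) : Bool :=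
  if Ldim (res G x false) ≤ Ldim (res G x true) then true else false

/-- `G` shatters the finite set `s` in the VC sense. -/
def VCShatters {X : Type*} (G : Set (X → Bool)) (s : Finset X) : Prop :=
  ∀ b : X → Bool, ∃ f ∈ G, ∀ x ∈ s, f x = b x

/-- VC dimension, with `VCdim ∅ = ⊥`. -/
noncomputable def VCdim {X : Type*} (G : Set (X → Bool)) : WithBot ℕ∞ :=
  ⨆ s : {s : Finset X // VCShatters G s}, (s.1.card : WithBot ℕ∞)

/-- The dual class of `F`: one hypothesis `f ↦ f x` on domain `F` for each `x ∈ X`. -/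
def dualClass {X : Type*} (F : Set (X → Bool)) : Set (↥F → Bool) :=
  {g | ∃ x : X, g = fun f => f.1 x}

/-- The point function `δ_x`: `true` exactly at `x`. -/
noncomputable def pointFn {X : Type*} (x : X) : X → Bool :=
  fun y => if y = x then true else false

/-- The class of point functions and negated point functions on `X`. -/
noncomputable def Fnegpt (X : Type*) : Set (X → Bool) :=
  {f | ∃ x : X, f = pointFn x} ∪ {f | ∃ x : X, f = fun y => ! pointFn x y}

section Shattering

variable {X : Type*} {G H : Set (X → Bool)} {n : ℕ}

theorem ShattersDepth.mono (hGH : G ⊆ H) : ShattersDepth G n → ShattersDepth H n :=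
  fun ⟨t, ht⟩ => ⟨t, fun b hb => (ht b hb).mono fun _ hf => ⟨hGH hf.1, hf.2⟩⟩

theorem shattersDepth_zero_iff [Nonempty X] : ShattersDepth G 0 ↔ G.Nonempty := by
  constructor
  · rintro ⟨t, ht⟩
    exact (ht [] rfl).mono fun _ hf => hf.1
  · rintro ⟨f, hf⟩
    refine ⟨fun _ => Classical.arbitrary X, fun b hb => ?_⟩
    rw [List.length_eq_zero_iff.mp hb]
    exact ⟨f, hf, by simp⟩

theorem shattersDepth_succ_iff :
    ShattersDepth G (n + 1) ↔ ∃ x, ∀ c, ShattersDepth (res G x c) n := by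
  constructor
  · rintro ⟨t, ht⟩
    refine ⟨t [], fun c => ⟨fun l => t (c :: l), fun b hb => ?_⟩⟩
    obtain ⟨f, hfG, hf⟩ := ht (c :: b) (by simp [hb])
    refine ⟨f, ⟨hfG, by simpa using hf 0 (by simp)⟩, fun i hi => ?_⟩
    simpa using hf (i + 1) (by simpa using hi)
  · rintro ⟨x, hx⟩
    choose t ht using hx
    refine ⟨fun l => l.casesOn x fun c l => t c l, fun b hb => ?_⟩
    obtain _ | ⟨c, b⟩ := b
    · simp at hb
    obtain ⟨f, ⟨hfG, hfx⟩, hf⟩ := ht c b (by simpa using hb)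
    refine ⟨f, hfG, fun i hi => ?_⟩
    obtain _ | i := i
    · simpa using hfx
    · simpa using hf i (by simpa using hi)

theorem ShattersDepth.of_succ (h : ShattersDepth G (n + 1)) : ShattersDepth G n := by
  obtain ⟨x, hx⟩ := shattersDepth_succ_iff.mp h
  exact (hx true).mono fun _ hf => hf.1

theorem ShattersDepth.anti {m : ℕ} (hmn : m ≤ n) (h : ShattersDepth G n) :
    ShattersDepth G m := by
  induction n, hmn using Nat.le_induction with
  | base => exact h
  | succ n _ ih => exact ih h.of_succ

theorem not_shattersDepth_succ_of_forall_res
    (h : ∀ x, ∃ c, ¬ ShattersDepth (res G x c) n) : ¬ ShattersDepth G (n + 1) := by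
  rw [shattersDepth_succ_iff]
  rintro ⟨x, hx⟩
  obtain ⟨c, hc⟩ := h x
  exact hc (hx c)

theorem ShattersDepth.two_pow_le_encard (h : ShattersDepth G n) : 2 ^ n ≤ G.encard := by
  induction n generalizing G with
  | zero =>
    obtain ⟨t, ht⟩ := h
    rw [pow_zero, Set.one_le_encard_iff_nonempty]
    exact (ht [] rfl).mono fun _ hf => hf.1
  | succ n ih =>
    obtain ⟨x, hx⟩ := shattersDepth_succ_iff.mp h
    have hdisj : Disjoint (res G x true) (res G x false) :=
      Set.disjoint_left.mpr fun _ hf hf' => Bool.noConfusion (hf.2.symm.trans hf'.2)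
    calc 2 ^ (n + 1) = 2 ^ n + 2 ^ n := by rw [pow_succ, mul_two]
      _ ≤ (res G x true).encard + (res G x false).encard :=
        add_le_add (ih (hx true)) (ih (hx false))
      _ = (res G x true ∪ res G x false).encard := (Set.encard_union_eq hdisj).symm
      _ ≤ G.encard := Set.encard_le_encard (Set.union_subset (fun _ hf => hf.1) fun _ hf => hf.1)

theorem not_shattersDepth_of_encard_lt (h : G.encard < 2 ^ n) : ¬ ShattersDepth G n :=
  fun hG => (hG.two_pow_le_encard.trans_lt h).false

theorem Ldim_le_of_not_shattersDepth (h : ¬ ShattersDepth G (n + 1)) : Ldim G ≤ n := by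
  refine iSup_le fun ⟨m, hm⟩ => ?_
  have hmn : m ≤ n := by
    by_contra! hnm
    exact h (hm.anti hnm)
  exact_mod_cast hmn

theorem le_Ldim_of_shattersDepth (h : ShattersDepth G n) : (n : WithBot ℕ∞) ≤ Ldim G :=
  le_iSup (fun m : {m : ℕ // ShattersDepth G m} => (m.1 : WithBot ℕ∞)) ⟨n, h⟩

theorem VCShatters.res {s : Finset X} {x : X} (h : VCShatters G (insert x s)) (hx : x ∉ s)
    (c : Bool) : VCShatters (res G x c) s := by
  intro b
  obtain ⟨f, hfG, hf⟩ := h (Function.update b x c)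
  refine ⟨f, ⟨hfG, by simpa using hf x (by simp)⟩, fun y hy => ?_⟩
  rw [hf y (by simp [hy]), Function.update_of_ne (ne_of_mem_of_not_mem hy hx)]

theorem VCShatters.shattersDepth [Nonempty X] {s : Finset X} (h : VCShatters G s) :
    ShattersDepth G s.card := by
  induction s using Finset.induction_on generalizing G with
  | empty =>
    obtain ⟨f, hf, -⟩ := h fun _ => true
    exact shattersDepth_zero_iff.mpr ⟨f, hf⟩
  | insert x s hx ih =>
    rw [Finset.card_insert_of_notMem hx]
    exact shattersDepth_succ_iff.mpr ⟨x, fun c => ih (h.res hx c)⟩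

theorem VCdim_le_of_forall_vcShatters (h : ∀ s, VCShatters G s → s.card ≤ n) :
    VCdim G ≤ n :=
  iSup_le fun ⟨s, hs⟩ => by exact_mod_cast h s hs

theorem le_VCdim_of_vcShatters {s : Finset X} (h : VCShatters G s) :
    (s.card : WithBot ℕ∞) ≤ VCdim G :=
  le_iSup (fun s : {s : Finset X // VCShatters G s} => (s.1.card : WithBot ℕ∞)) ⟨s, h⟩

theorem VCdim_eq_top_of_forall_vcShatters (h : ∀ s : Finset X, VCShatters G s) [Infinite X] :
    VCdim G = ⊤ :=
  ENat.WithBot.eq_top_iff_forall_ge.mpr fun n => by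
    obtain ⟨s, rfl⟩ := Infinite.exists_subset_card_eq X n
    exact le_VCdim_of_vcShatters (h s)

end Shattering

section PointFunctions

variable {X : Type*}

noncomputable def negPointFn (x : X) : X → Bool := fun y => !pointFn x y

@[simp]
theorem pointFn_eq_true_iff {x y : X} : pointFn x y = true ↔ y = x := by
  simp [pointFn]

@[simp]
theorem pointFn_eq_false_iff {x y : X} : pointFn x y = false ↔ y ≠ x := by
  simp [pointFn]

@[simp]
theorem negPointFn_eq_true_iff {x y : X} : negPointFn x y = true ↔ y ≠ x := by
  simp [negPointFn]

@[simp]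
theorem negPointFn_eq_false_iff {x y : X} : negPointFn x y = false ↔ y = x := by
  simp [negPointFn]

theorem Fnegpt_eq : Fnegpt X = Set.range pointFn ∪ Set.range negPointFn := by
  ext f
  simp only [Fnegpt, Set.mem_union, Set.mem_ofPred_eq, Set.mem_range, eq_comm]
  rfl

end PointFunctions

section UpperBounds

variable {X : Type*} {G : Set (X → Bool)}

theorem not_shattersDepth_one_of_subset_singleton {f : X → Bool} (hG : G ⊆ {f}) :
    ¬ ShattersDepth G 1 :=
  not_shattersDepth_of_encard_lt <| (Set.encard_le_encard hG).trans_lt (by simp)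

theorem not_shattersDepth_two_of_subset_pair {f g : X → Bool} (hG : G ⊆ {f, g}) :
    ¬ ShattersDepth G 2 := by
  refine not_shattersDepth_of_encard_lt <|
    ((Set.encard_le_encard hG).trans (Set.encard_insert_le _ _)).trans_lt ?_
  rw [Set.encard_singleton]
  decide

theorem not_shattersDepth_two_of_subset_range_negPointFn (hG : G ⊆ Set.range negPointFn) :
    ¬ ShattersDepth G 2 := by
  refine not_shattersDepth_succ_of_forall_res fun x => ⟨false, ?_⟩
  refine not_shattersDepth_one_of_subset_singleton (f := negPointFn x) ?_
  rintro f ⟨hf, hfx⟩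
  obtain ⟨z, rfl⟩ := hG hf
  rw [negPointFn_eq_false_iff.mp hfx]
  rfl

theorem not_shattersDepth_three_of_subset_insert_pointFn {a : X}
    (hG : G ⊆ insert (pointFn a) (Set.range negPointFn)) : ¬ ShattersDepth G 3 := by
  refine not_shattersDepth_succ_of_forall_res fun x => ⟨false, ?_⟩
  refine not_shattersDepth_two_of_subset_pair (f := pointFn a) (g := negPointFn x) ?_
  rintro f ⟨hf, hfx⟩
  obtain rfl | ⟨z, rfl⟩ := hG hf
  · exact .inl rfl
  · rw [negPointFn_eq_false_iff.mp hfx]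
    exact .inr rfl

theorem not_shattersDepth_three_of_subset_insert_negPointFn {a : X}
    (hG : G ⊆ insert (negPointFn a) (Set.range pointFn)) : ¬ ShattersDepth G 3 := by
  refine not_shattersDepth_succ_of_forall_res fun x => ⟨true, ?_⟩
  refine not_shattersDepth_two_of_subset_pair (f := pointFn x) (g := negPointFn a) ?_
  rintro f ⟨hf, hfx⟩
  obtain rfl | ⟨z, rfl⟩ := hG hf
  · exact .inr rfl
  · rw [pointFn_eq_true_iff.mp hfx]
    exact .inl rfl

theorem not_shattersDepth_Fnegpt_four : ¬ ShattersDepth (Fnegpt X) 4 := by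
  refine not_shattersDepth_succ_of_forall_res fun x => ⟨true, ?_⟩
  refine not_shattersDepth_three_of_subset_insert_pointFn (a := x) ?_
  rintro f ⟨hf, hfx⟩
  rw [Fnegpt_eq] at hf
  obtain ⟨z, rfl⟩ | ⟨z, rfl⟩ := hf
  · rw [pointFn_eq_true_iff.mp hfx]
    exact .inl rfl
  · exact .inr ⟨z, rfl⟩

end UpperBounds

section LowerBounds

variable {X : Type*}

theorem Set.exists_three_ne_of_three_le_encard {s : Set X} (hs : 3 ≤ s.encard) :
    ∃ a ∈ s, ∃ b ∈ s, ∃ c ∈ s, a ≠ b ∧ a ≠ c ∧ b ≠ c := by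
  obtain ⟨t, hts, ht⟩ := Set.exists_subset_encard_eq hs
  obtain ⟨a, b, c, hab, hac, hbc, rfl⟩ := Set.encard_eq_three.mp ht
  exact ⟨a, hts (by simp), b, hts (by simp), c, hts (by simp), hab, hac, hbc⟩

theorem exists_three_ne_of_infinite [Infinite X] (x : X) :
    ∃ a b c : X, a ≠ b ∧ a ≠ c ∧ b ≠ c ∧ a ≠ x ∧ b ≠ x ∧ c ≠ x := by
  obtain ⟨a, ha, b, hb, c, hc, hab, hac, hbc⟩ := Set.exists_three_ne_of_three_le_encard
    (s := {x}ᶜ) (by rw [(Set.finite_singleton x).infinite_compl.encard_eq]; exact le_top)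
  exact ⟨a, b, c, hab, hac, hbc, ha, hb, hc⟩

theorem vcShatters_pair {G : Set (X → Bool)} {p q : X}
    (h : ∀ b₁ b₂ : Bool, ∃ f ∈ G, f p = b₁ ∧ f q = b₂) : VCShatters G {p, q} := by
  intro β
  obtain ⟨f, hf, hp, hq⟩ := h (β p) (β q)
  exact ⟨f, hf, by simp [hp, hq]⟩

theorem vcShatters_Fnegpt_triple {a b c d : X} (hab : a ≠ b) (hac : a ≠ c) (hbc : b ≠ c)
    (had : a ≠ d) (hbd : b ≠ d) (hcd : c ≠ d) : VCShatters (Fnegpt X) {a, b, c} := by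
  intro β
  suffices ∃ f ∈ Fnegpt X, f a = β a ∧ f b = β b ∧ f c = β c by
    obtain ⟨f, hf, ha, hb, hc⟩ := this
    exact ⟨f, hf, by simp [ha, hb, hc]⟩
  rw [Fnegpt_eq]
  have hba := hab.symm
  have hca := hac.symm
  have hcb := hbc.symm
  cases β a <;> cases β b <;> cases β c
  exacts [⟨pointFn d, .inl ⟨d, rfl⟩, by simp [*]⟩,
    ⟨pointFn c, .inl ⟨c, rfl⟩, by simp [*]⟩,
    ⟨pointFn b, .inl ⟨b, rfl⟩, by simp [*]⟩,
    ⟨negPointFn a, .inr ⟨a, rfl⟩, by simp [*]⟩,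
    ⟨pointFn a, .inl ⟨a, rfl⟩, by simp [*]⟩,
    ⟨negPointFn b, .inr ⟨b, rfl⟩, by simp [*]⟩,
    ⟨negPointFn c, .inr ⟨c, rfl⟩, by simp [*]⟩,
    ⟨negPointFn d, .inr ⟨d, rfl⟩, by simp [*]⟩]

end LowerBounds

section Dimensions

variable {X : Type*} [Infinite X]

theorem exists_vcShatters_Fnegpt_card_three :
    ∃ s : Finset X, s.card = 3 ∧ VCShatters (Fnegpt X) s := by
  obtain ⟨a, b, c, hab, hac, hbc, had, hbd, hcd⟩ :=
    exists_three_ne_of_infinite (Classical.arbitrary X)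
  exact ⟨{a, b, c}, Finset.card_eq_three.mpr ⟨a, b, c, hab, hac, hbc, rfl⟩,
    vcShatters_Fnegpt_triple hab hac hbc had hbd hcd⟩

theorem VCdim_Fnegpt : VCdim (Fnegpt X) = 3 := by
  obtain ⟨s, hs, hsh⟩ := exists_vcShatters_Fnegpt_card_three (X := X)
  refine le_antisymm (VCdim_le_of_forall_vcShatters fun t ht => ?_) ?_
  · by_contra! h
    exact not_shattersDepth_Fnegpt_four (ht.shattersDepth.anti h)
  · exact_mod_cast hs ▸ le_VCdim_of_vcShatters hsh

theorem Ldim_Fnegpt : Ldim (Fnegpt X) = 3 := by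
  obtain ⟨s, hs, hsh⟩ := exists_vcShatters_Fnegpt_card_three (X := X)
  refine le_antisymm (Ldim_le_of_not_shattersDepth not_shattersDepth_Fnegpt_four) ?_
  exact_mod_cast hs ▸ le_Ldim_of_shattersDepth hsh.shattersDepth

end Dimensions

section SOA

variable {X : Type*}

/-- For `T = {x₁, …, x_d}` with `d ≥ 2` this is the paper's class
`{f ∈ F^negpt : ∃ j, f x_j = 1}`. -/
noncomputable def pointsWithNegPoints (T : Set X) : Set (X → Bool) :=
  pointFn '' T ∪ Set.range negPointFn

theorem pointsWithNegPoints_subset_Fnegpt (T : Set X) : pointsWithNegPoints T ⊆ Fnegpt X :=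
  Fnegpt_eq ▸ Set.union_subset_union_left _ (Set.image_subset_range _ _)

theorem Ldim_res_pointsWithNegPoints_false_le_two (T : Set X) (x : X) :
    Ldim (res (pointsWithNegPoints T) x false) ≤ 2 := by
  refine Ldim_le_of_not_shattersDepth (not_shattersDepth_three_of_subset_insert_negPointFn
    (a := x) ?_)
  rintro f ⟨⟨y, -, rfl⟩ | ⟨z, rfl⟩, hfx⟩
  · exact .inr ⟨y, rfl⟩
  · rw [negPointFn_eq_false_iff.mp hfx]
    exact .inl rfl

theorem Ldim_res_pointsWithNegPoints_true_le_one {T : Set X} {x : X} (hx : x ∉ T) :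
    Ldim (res (pointsWithNegPoints T) x true) ≤ 1 := by
  refine Ldim_le_of_not_shattersDepth (not_shattersDepth_two_of_subset_range_negPointFn ?_)
  rintro f ⟨⟨y, hy, rfl⟩ | ⟨z, rfl⟩, hfx⟩
  · exact absurd (pointFn_eq_true_iff.mp hfx ▸ hy) hx
  · exact ⟨z, rfl⟩

theorem two_le_Ldim_res_pointsWithNegPoints_true [Infinite X] {T : Set X} {x : X} (hx : x ∈ T) :
    2 ≤ Ldim (res (pointsWithNegPoints T) x true) := by
  obtain ⟨y, z, w, hyz, hyw, hzw, hyx, hzx, hwx⟩ := exists_three_ne_of_infinite x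
  have hzy := hyz.symm
  have hwy := hyw.symm
  have hwz := hzw.symm
  have hsh : VCShatters (res (pointsWithNegPoints T) x true) {y, z} := by
    refine vcShatters_pair fun b₁ b₂ => ?_
    cases b₁ <;> cases b₂
    exacts [⟨pointFn x, ⟨.inl ⟨x, hx, rfl⟩, by simp⟩, by simp [*]⟩,
      ⟨negPointFn y, ⟨.inr ⟨y, rfl⟩, by simp [hyx.symm]⟩, by simp [*]⟩,
      ⟨negPointFn z, ⟨.inr ⟨z, rfl⟩, by simp [hzx.symm]⟩, by simp [*]⟩,
      ⟨negPointFn w, ⟨.inr ⟨w, rfl⟩, by simp [hwx.symm]⟩, by simp [*]⟩]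
  exact_mod_cast Finset.card_pair hyz ▸ le_Ldim_of_shattersDepth hsh.shattersDepth

theorem two_le_Ldim_res_pointsWithNegPoints_false {T : Set X} (hT : 3 ≤ T.encard) {x : X}
    (hx : x ∉ T) : 2 ≤ Ldim (res (pointsWithNegPoints T) x false) := by
  obtain ⟨a, ha, b, hb, c, hc, hab, hac, hbc⟩ := Set.exists_three_ne_of_three_le_encard hT
  have hax : a ≠ x := ne_of_mem_of_not_mem ha hx
  have hbx : b ≠ x := ne_of_mem_of_not_mem hb hx
  have hcx : c ≠ x := ne_of_mem_of_not_mem hc hx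
  have hba := hab.symm
  have hca := hac.symm
  have hcb := hbc.symm
  have hsh : VCShatters (res (pointsWithNegPoints T) x false) {a, b} := by
    refine vcShatters_pair fun b₁ b₂ => ?_
    cases b₁ <;> cases b₂
    exacts [⟨pointFn c, ⟨.inl ⟨c, hc, rfl⟩, by simp [hcx.symm]⟩, by simp [*]⟩,
      ⟨pointFn b, ⟨.inl ⟨b, hb, rfl⟩, by simp [hbx.symm]⟩, by simp [*]⟩,
      ⟨pointFn a, ⟨.inl ⟨a, ha, rfl⟩, by simp [hax.symm]⟩, by simp [*]⟩,
      ⟨negPointFn x, ⟨.inr ⟨x, rfl⟩, by simp⟩, by simp [*]⟩]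
  have : Nonempty X := ⟨x⟩
  exact_mod_cast Finset.card_pair hab ▸ le_Ldim_of_shattersDepth hsh.shattersDepth

theorem SOA_pointsWithNegPoints [Infinite X] {T : Set X} (hT : 3 ≤ T.encard) (x : X) :
    SOA (pointsWithNegPoints T) x = decide (x ∈ T) := by
  by_cases hx : x ∈ T
  · rw [SOA, if_pos ((Ldim_res_pointsWithNegPoints_false_le_two T x).trans
      (two_le_Ldim_res_pointsWithNegPoints_true hx)), decide_eq_true hx]
  · rw [SOA, if_neg, decide_eq_false hx]
    intro hle
    have := ((two_le_Ldim_res_pointsWithNegPoints_false hT hx).trans hle).trans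
      (Ldim_res_pointsWithNegPoints_true_le_one hx)
    exact absurd this (by decide)

theorem vcShatters_setOf_SOA [Infinite X] (s : Finset X) :
    VCShatters {h : X → Bool | ∃ G ⊆ Fnegpt X, h = SOA G} s := by
  intro b
  set T : Set X := {x | x ∈ s → b x = true}
  have hT : 3 ≤ T.encard := by
    have hsT : (↑s)ᶜ ⊆ T := fun x hx hxs => absurd hxs hx
    rw [(s.finite_toSet.infinite_compl.mono hsT).encard_eq]
    exact le_top
  refine ⟨SOA (pointsWithNegPoints T), ⟨_, pointsWithNegPoints_subset_Fnegpt T, rfl⟩,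
    fun x hx => ?_⟩
  rw [SOA_pointsWithNegPoints hT]
  simp [T, hx]

end SOA

theorem stmt16_general (X : Type*) [Infinite X] :
    VCdim (Fnegpt X) = (3 : WithBot ℕ∞) ∧
    Ldim (Fnegpt X) = (3 : WithBot ℕ∞) ∧
    VCdim {h : X → Bool | ∃ G ⊆ Fnegpt X, h = SOA G} = (⊤ : WithBot ℕ∞) :=
  ⟨VCdim_Fnegpt, Ldim_Fnegpt, VCdim_eq_top_of_forall_vcShatters vcShatters_setOf_SOA⟩

/-- The class of point and negated point functions on a countably infinite set has VC and
Littlestone dimension `3`, but the class of all SOA classifiers of its subclasses has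
infinite VC dimension. -/
theorem stmt16 (X : Type*) [Countable X] [Infinite X] :
    VCdim (Fnegpt X) = (3 : WithBot ℕ∞) ∧
    Ldim (Fnegpt X) = (3 : WithBot ℕ∞) ∧
    VCdim {h : X → Bool | ∃ G ⊆ Fnegpt X, h = SOA G} = (⊤ : WithBot ℕ∞) :=
  stmt16_general X
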